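/- arXiv:2204.05612 — 2 statements merged into one kernel-verified Lean document; each statement's English description precedes it below -/
import Mathlib

section
/- For all j ∈ ℕ₀ and ℓ ∈ ℕ, the central factorial numbers of the second kind are expressed in terms of Stirling numbers of the second kind by T(j+ℓ, ℓ) / C(j+ℓ, ℓ) = ∑_{m=0}^{j} (-1)^m C(j, m) (ℓ/2)^m · S(j+ℓ-m, ℓ) / C(j+ℓ-m, ℓ). -/
open scoped Classical BigOperators Nat

/-- Weighted Stirling numbers of the second kind (Carlitz). -/
noncomputable def weightedR (n k : ℕ) (r : ℝ) : ℝ :=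
  (1 / (k ! : ℝ)) * ∑ j ∈ Finset.range (k + 1),
    (-1 : ℝ) ^ (k - j) * (k.choose j) * (r + j) ^ n

/-- Central factorial numbers of the second kind. -/
noncomputable def centralT (n ℓ : ℕ) : ℝ :=
  (1 / (ℓ ! : ℝ)) * ∑ j ∈ Finset.range (ℓ + 1),
    (-1 : ℝ) ^ j * (ℓ.choose j) * ((ℓ : ℝ) / 2 - j) ^ n

/-- Stirling numbers of the second kind. -/
def stirlingS : ℕ → ℕ → ℕ
  | 0, 0 => 1
  | 0, _ + 1 => 0
  | _ + 1, 0 => 0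
  | n + 1, k + 1 => (k + 1) * stirlingS n (k + 1) + stirlingS n k

/-- The sinc function. -/
noncomputable def sinc (z : ℂ) : ℂ := if z = 0 then 1 else Complex.sin z / z

/-- The hyperbolic sinc function. -/
noncomputable def sinhc (z : ℂ) : ℂ := if z = 0 then 1 else Complex.sinh z / z

/-- Partial Bell polynomials. -/
noncomputable def bellB (n k : ℕ) (x : ℕ → ℝ) : ℝ :=
  ∑ ℓ ∈ Finset.univ.filter (fun ℓ : Fin n → Fin (n + 1) =>
      (∑ i, (i.1 + 1) * (ℓ i).1) = n ∧ (∑ i, (ℓ i).1) = k),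
    ((n ! : ℝ) / ∏ i, ((ℓ i).1)!) * ∏ i, (x (i.1 + 1) / (i.1 + 1)!) ^ (ℓ i).1

/-- Rising factorial of a real number. -/
noncomputable def risingF (x : ℝ) (k : ℕ) : ℝ := ∏ i ∈ Finset.range k, (x + i)

/-- Number of set partitions of an `n`-element set into `ℓ` odd-sized blocks. -/
noncomputable def oddPartCount (n ℓ : ℕ) : ℕ :=
  ((Finset.univ : Finset (Finset (Finset (Fin n)))).filter
    (fun P : Finset (Finset (Fin n)) => P.card = ℓ ∧ (∀ b ∈ P, Odd b.card) ∧
      ((P : Set (Finset (Fin n))).PairwiseDisjoint id) ∧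
      P.sup id = Finset.univ)).card

/-!
Expanding `(ℓ/2 - i)^n = (-ℓ/2 + (ℓ - i))^n` binomially in the definition of `T` and
using the explicit formula `ℓ! S(n, ℓ) = ∑ᵢ (-1)^i C(ℓ, i) (ℓ - i)^n` gives
`T(n, ℓ) = ∑ₘ (-1)^m C(n, m) (ℓ/2)^m S(n - m, ℓ)`. For `n = j + ℓ` the terms with `m > j`
vanish, and `C(j + ℓ, m) C(j + ℓ - m, ℓ) = C(j, m) C(j + ℓ, ℓ)` turns the weights into the
stated ones.
-/

open Finset Nat

theorem stirlingS_eq_stirlingSecond : ∀ n k, stirlingS n k = stirlingSecond n k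
  | 0, 0 | 0, _ + 1 | _ + 1, 0 => rfl
  | n + 1, k + 1 => by
    rw [stirlingS, stirlingSecond_succ_succ, stirlingS_eq_stirlingSecond n (k + 1),
      stirlingS_eq_stirlingSecond n k]

section CommRing

variable {R : Type*} [CommRing R]

theorem sub_mul_choose_succ (k i : ℕ) :
    (((k + 1 : ℕ) : R) - i) * (k + 1).choose i = (k + 1) * k.choose i := by
  rcases le_or_gt i (k + 1) with hi | hi
  · have h := congrArg (Nat.cast : ℕ → R) (choose_mul_succ_eq k i)
    push_cast [hi] at h ⊢
    linear_combination -h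
  · simp [choose_eq_zero_of_lt hi, choose_eq_zero_of_lt (by omega : k < i)]

theorem alternating_sum_choose_sub_pow_succ (k n : ℕ) :
    ∑ i ∈ range (k + 2), (-1 : R) ^ i * (k + 1).choose i * (((k + 1 : ℕ) : R) - i) ^ (n + 1) =
      (k + 1) *
        (∑ i ∈ range (k + 2), (-1 : R) ^ i * (k + 1).choose i * (((k + 1 : ℕ) : R) - i) ^ n +
          ∑ i ∈ range (k + 1), (-1 : R) ^ i * k.choose i * ((k : R) - i) ^ n) := by
  have absorb : ∀ i, (-1 : R) ^ i * (k + 1).choose i * (((k + 1 : ℕ) : R) - i) ^ (n + 1) =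
      (k + 1) * ((-1 : R) ^ i * k.choose i * (((k + 1 : ℕ) : R) - i) ^ n) := fun i => by
    linear_combination
      (-1 : R) ^ i * (((k + 1 : ℕ) : R) - i) ^ n * sub_mul_choose_succ (R := R) k i
  -- Pascal's rule `C(k+1, i+1) = C(k, i) + C(k, i+1)` splits the first sum on the right.
  have pascal :
      ∑ i ∈ range (k + 2), (-1 : R) ^ i * (k + 1).choose i * (((k + 1 : ℕ) : R) - i) ^ n =
      ∑ i ∈ range (k + 2), (-1 : R) ^ i * k.choose i * (((k + 1 : ℕ) : R) - i) ^ n -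
        ∑ i ∈ range (k + 1), (-1 : R) ^ i * k.choose i * ((k : R) - i) ^ n := by
    rw [sum_range_succ' _ (k + 1), sum_range_succ' _ (k + 1), eq_sub_iff_add_eq,
      add_right_comm, ← sum_add_distrib]
    congr 1
    · refine sum_congr rfl fun i _ => ?_
      push_cast [choose_succ_succ]
      ring
    · simp
  simp_rw [absorb, ← mul_sum, pascal, sub_add_cancel]

theorem factorial_mul_stirlingSecond (n k : ℕ) :
    (k ! * stirlingSecond n k : R) =
      ∑ i ∈ range (k + 1), (-1 : R) ^ i * k.choose i * ((k : R) - i) ^ n := by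
  induction n generalizing k with
  | zero =>
    cases k with
    | zero => simp
    | succ k =>
      have h := congrArg (Int.cast : ℤ → R)
        (Int.alternating_sum_range_choose_of_ne k.succ_ne_zero)
      push_cast at h
      simp [h]
  | succ n ih =>
    cases k with
    | zero => simp
    | succ k =>
      rw [alternating_sum_choose_sub_pow_succ, ← ih, ← ih, stirlingSecond_succ_succ,
        factorial_succ]
      push_cast
      ring

end CommRing

theorem centralT_eq_sum_stirlingS (n ℓ : ℕ) :
    centralT n ℓ = ∑ m ∈ range (n + 1),
      (-1 : ℝ) ^ m * n.choose m * ((ℓ : ℝ) / 2) ^ m * stirlingS (n - m) ℓ := by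
  calc centralT n ℓ
      = (ℓ ! : ℝ)⁻¹ * ∑ m ∈ range (n + 1), (-((ℓ : ℝ) / 2)) ^ m * n.choose m *
          ∑ i ∈ range (ℓ + 1), (-1 : ℝ) ^ i * ℓ.choose i * ((ℓ : ℝ) - i) ^ (n - m) := by
        rw [centralT, one_div]
        congr 1
        simp_rw [mul_sum]
        rw [sum_comm]
        refine sum_congr rfl fun i _ => ?_
        rw [show (ℓ : ℝ) / 2 - i = -((ℓ : ℝ) / 2) + (ℓ - i) by ring, add_pow, mul_sum]
        refine sum_congr rfl fun m _ => ?_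
        ring
    _ = _ := by
        simp_rw [← factorial_mul_stirlingSecond, ← stirlingS_eq_stirlingSecond, mul_sum]
        refine sum_congr rfl fun m _ => ?_
        rw [neg_pow]
        field_simp

theorem choose_mul_choose_add_sub {j m : ℕ} (ℓ : ℕ) (hm : m ≤ j) :
    (j + ℓ).choose m * (j + ℓ - m).choose ℓ = j.choose m * (j + ℓ).choose ℓ := by
  have h := choose_mul (n := j + ℓ) hm
  rw [choose_symm_add, choose_symm_of_eq_add (by omega : j + ℓ - m = j - m + ℓ)] at h
  rw [← h, mul_comm]

theorem stmt6_general (j ℓ : ℕ) :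
    centralT (j + ℓ) ℓ / ((j + ℓ).choose ℓ) =
      ∑ m ∈ Finset.range (j + 1),
        (-1 : ℝ) ^ m * (j.choose m) * ((ℓ : ℝ) / 2) ^ m *
          (stirlingS (j + ℓ - m) ℓ) / ((j + ℓ - m).choose ℓ) := by
  rw [centralT_eq_sum_stirlingS,
    ← sum_subset (range_subset_range.2 (by omega : j + 1 ≤ j + ℓ + 1)), sum_div]
  · refine sum_congr rfl fun m hm => ?_
    have hmj : m ≤ j := mem_range_succ_iff.1 hm
    have hpos : 0 < ((j + ℓ - m).choose ℓ : ℝ) := by exact_mod_cast choose_pos (by omega)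
    have hpos' : 0 < ((j + ℓ).choose ℓ : ℝ) := by exact_mod_cast choose_pos (by omega)
    have hchoose :
        ((j + ℓ).choose m * (j + ℓ - m).choose ℓ : ℝ) = j.choose m * (j + ℓ).choose ℓ := by
      exact_mod_cast choose_mul_choose_add_sub ℓ hmj
    rw [div_eq_div_iff hpos'.ne' hpos.ne']
    linear_combination (-1 : ℝ) ^ m * ((ℓ : ℝ) / 2) ^ m * stirlingS (j + ℓ - m) ℓ * hchoose
  · intro m hm hm'
    rw [mem_range] at hm hm'
    rw [stirlingS_eq_stirlingSecond, stirlingSecond_eq_zero_of_lt (by omega)]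
    simp

theorem stmt6 (j ℓ : ℕ) (hℓ : 1 ≤ ℓ) :
    centralT (j + ℓ) ℓ / ((j + ℓ).choose ℓ) =
      ∑ m ∈ Finset.range (j + 1),
        (-1 : ℝ) ^ m * (j.choose m) * ((ℓ : ℝ) / 2) ^ m *
          (stirlingS (j + ℓ - m) ℓ) / ((j + ℓ - m).choose ℓ) :=
  stmt6_general j ℓ
end

section
/- For every ℓ ∈ ℕ₀, the ℓ-th power of the hyperbolic sinc function has the power series expansion sinhc^ℓ(z) = 1 + ∑_{j=1}^{∞} [T(2j+ℓ, ℓ) / C(2j+ℓ, ℓ)] (2z)^{2j} / (2j)!, valid for all z ∈ ℂ. -/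
open scoped Classical BigOperators Nat

/-!
Expanding `sinh z = (exp z - exp (-z)) / 2` binomially gives
`sinh z ^ ℓ = 2⁻ℓ ∑ⱼ (-1)^j C(ℓ, j) exp ((ℓ - 2j) z)`, whose `n`-th Taylor coefficient is
`2^(n - ℓ) ℓ! T(n, ℓ) / n!`. Up to sign, `ℓ! T(n, ℓ)` is the `ℓ`-th forward difference of
`r ↦ r ^ n` at `-ℓ/2`, so it vanishes for `n < ℓ` and equals `ℓ!` for `n = ℓ`; the reflection
`j ↦ ℓ - j` kills it when `n + ℓ` is odd. Only the indices `n = 2j + ℓ` survive, and dividing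
by `z ^ ℓ` gives the series for `sinhc z ^ ℓ`.
-/

open Finset fwdDiff

lemma factorial_mul_centralT (n ℓ : ℕ) :
    (ℓ ! : ℝ) * centralT n ℓ = (-1) ^ (n + ℓ) * (Δ_[1])^[ℓ] (fun r : ℝ => r ^ n) (-(ℓ / 2)) := by
  have hℓ : (ℓ ! : ℝ) ≠ 0 := by positivity
  rw [centralT, ← mul_assoc, mul_one_div_cancel hℓ, one_mul, ← zero_add (-(ℓ / 2 : ℝ)),
    ← fwdDiff_iter_comp_add, fwdDiff_iter_eq_sum_shift, mul_sum]
  refine sum_congr rfl fun k hk => ?_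
  have hkℓ : k ≤ ℓ := by simpa [Nat.lt_succ_iff] using hk
  have hsign : (-1 : ℝ) ^ k = (-1) ^ (n + ℓ) * (-1) ^ (ℓ - k) * (-1) ^ n := by
    rw [← pow_add, ← pow_add, neg_one_pow_eq_pow_mod_two, neg_one_pow_eq_pow_mod_two (n := _ + n)]
    congr 1
    omega
  rw [zsmul_eq_mul, zero_add, nsmul_eq_mul, mul_one,
    show (k : ℝ) + -(ℓ / 2) = -(ℓ / 2 - k) by ring, neg_pow (ℓ / 2 - k : ℝ), hsign]
  push_cast
  ring

lemma centralT_eq_zero_of_lt {n ℓ : ℕ} (h : n < ℓ) : centralT n ℓ = 0 := by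
  have := factorial_mul_centralT n ℓ
  rw [fwdDiff_iter_pow_eq_zero_of_lt h, Pi.zero_apply, mul_zero] at this
  exact (mul_eq_zero.mp this).resolve_left (by positivity)

lemma centralT_self (ℓ : ℕ) : centralT ℓ ℓ = 1 := by
  have := factorial_mul_centralT ℓ ℓ
  rw [fwdDiff_iter_eq_factorial, ← two_mul, pow_mul, neg_one_sq, one_pow, one_mul] at this
  exact (mul_eq_left₀ (by positivity)).mp this

lemma centralT_eq_zero_of_odd_add {n ℓ : ℕ} (h : Odd (n + ℓ)) : centralT n ℓ = 0 := by
  set f : ℕ → ℝ := fun j => (-1) ^ j * ℓ.choose j * ((ℓ : ℝ) / 2 - j) ^ n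
  have hrefl : ∀ j ∈ range (ℓ + 1), f (ℓ + 1 - 1 - j) = -f j := by
    intro j hj
    have hjℓ : j ≤ ℓ := by simpa [Nat.lt_succ_iff] using hj
    have hsign : (-1 : ℝ) ^ (ℓ - j) * (-1) ^ n = -(-1) ^ j := by
      rw [← pow_add, ← neg_one_mul ((-1 : ℝ) ^ j), ← pow_succ', neg_one_pow_eq_pow_mod_two,
        neg_one_pow_eq_pow_mod_two (n := j + 1)]
      obtain ⟨k, hk⟩ := h
      congr 1
      omega
    simp only [f, Nat.add_sub_cancel, Nat.choose_symm hjℓ, Nat.cast_sub hjℓ,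
      show (ℓ : ℝ) / 2 - (ℓ - j) = -(ℓ / 2 - j) by ring, neg_pow (ℓ / 2 - j : ℝ)]
    linear_combination (ℓ.choose j : ℝ) * (ℓ / 2 - j) ^ n * hsign
  have hsum : ∑ j ∈ range (ℓ + 1), f j = 0 := by
    have := sum_range_reflect f (ℓ + 1)
    rw [sum_congr rfl hrefl, sum_neg_distrib] at this
    linarith
  rw [centralT, hsum, mul_zero]

lemma hasSum_sum_mul_exp {ι : Type*} (s : Finset ι) (c w : ι → ℂ) (z : ℂ) :
    HasSum (fun n : ℕ => (∑ i ∈ s, c i * w i ^ n) * z ^ n / n !)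
      (∑ i ∈ s, c i * Complex.exp (w i * z)) := by
  have hexp (i : ι) :
      HasSum (fun n : ℕ => c i * ((w i * z) ^ n / n !)) (c i * Complex.exp (w i * z)) := by
    rw [Complex.exp_eq_exp_ℂ]
    exact (NormedSpace.expSeries_div_hasSum_exp (w i * z)).mul_left (c i)
  refine (hasSum_sum fun i _ => hexp i).congr_fun fun n => ?_
  simp only [sum_mul, sum_div, mul_pow, mul_assoc, mul_div_assoc]

lemma sinh_pow_eq_sum (ℓ : ℕ) (z : ℂ) :
    Complex.sinh z ^ ℓ =
      (∑ j ∈ range (ℓ + 1), (-1) ^ j * ℓ.choose j * Complex.exp ((ℓ - 2 * j) * z)) / 2 ^ ℓ := by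
  rw [Complex.sinh, div_pow, sub_eq_neg_add, add_pow]
  congr 1
  refine sum_congr rfl fun j hj => ?_
  have hjℓ : j ≤ ℓ := by simpa [Nat.lt_succ_iff] using hj
  rw [neg_pow, ← Complex.exp_nat_mul, ← Complex.exp_nat_mul, mul_assoc ((-1) ^ j),
    ← Complex.exp_add, Nat.cast_sub hjℓ]
  ring_nf

lemma sum_mul_pow_eq_centralT (n ℓ : ℕ) :
    ∑ j ∈ range (ℓ + 1), (-1) ^ j * ℓ.choose j * ((ℓ : ℂ) - 2 * j) ^ n =
      (2 : ℂ) ^ n * ℓ ! * centralT n ℓ := by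
  have hℓ : (ℓ ! : ℂ) ≠ 0 := Nat.cast_ne_zero.mpr ℓ.factorial_ne_zero
  rw [centralT]
  push_cast
  rw [mul_assoc ((2 : ℂ) ^ n), ← mul_assoc (ℓ ! : ℂ), mul_one_div_cancel hℓ, one_mul, mul_sum]
  refine sum_congr rfl fun j _ => ?_
  rw [show (ℓ : ℂ) - 2 * j = 2 * (ℓ / 2 - j) by ring, mul_pow]
  ring

lemma hasSum_sinh_pow (ℓ : ℕ) (z : ℂ) :
    HasSum (fun n : ℕ => (2 : ℂ) ^ n * ℓ ! * centralT n ℓ * z ^ n / n ! / 2 ^ ℓ)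
      (Complex.sinh z ^ ℓ) := by
  rw [sinh_pow_eq_sum]
  simpa only [sum_mul_pow_eq_centralT] using
    (hasSum_sum_mul_exp (range (ℓ + 1)) (fun j => (-1) ^ j * ℓ.choose j)
      (fun j => (ℓ : ℂ) - 2 * j) z).div_const (2 ^ ℓ)

lemma centralT_eq_zero_of_notMem_range {n ℓ : ℕ} (h : n ∉ Set.range fun j => 2 * j + ℓ) :
    centralT n ℓ = 0 := by
  rcases lt_or_ge n ℓ with hlt | hge
  · exact centralT_eq_zero_of_lt hlt
  · refine centralT_eq_zero_of_odd_add (Nat.not_even_iff_odd.mp fun ⟨k, hk⟩ => h ⟨k - ℓ, ?_⟩)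
    change 2 * (k - ℓ) + ℓ = n
    omega

lemma two_pow_mul_factorial_mul_div_pow (ℓ j : ℕ) (t : ℂ) {z : ℂ} (hz : z ≠ 0) :
    (2 : ℂ) ^ (2 * j + ℓ) * ℓ ! * t * z ^ (2 * j + ℓ) / (2 * j + ℓ)! / 2 ^ ℓ / z ^ ℓ =
      t / (2 * j + ℓ).choose ℓ * (2 * z) ^ (2 * j) / (2 * j)! := by
  have hfact : ((2 * j + ℓ).choose ℓ * (2 * j)! * ℓ ! : ℂ) = (2 * j + ℓ)! := by
    exact_mod_cast Nat.add_choose_mul_factorial_mul_factorial (2 * j) ℓ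
  have hchoose : ((2 * j + ℓ).choose ℓ : ℂ) ≠ 0 :=
    Nat.cast_ne_zero.mpr (Nat.choose_pos (Nat.le_add_left ℓ _)).ne'
  have hℓ : (ℓ ! : ℂ) ≠ 0 := Nat.cast_ne_zero.mpr ℓ.factorial_ne_zero
  rw [← hfact, pow_add, pow_add, mul_pow]
  field_simp

theorem stmt13 (ℓ : ℕ) (z : ℂ) :
    HasSum (fun j : ℕ =>
      ((centralT (2 * j + ℓ) ℓ : ℝ) : ℂ) / ((2 * j + ℓ).choose ℓ) *
        (2 * z) ^ (2 * j) / ((2 * j)!))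
      (sinhc z ^ ℓ) := by
  rcases eq_or_ne z 0 with rfl | hz
  · rw [sinhc, if_pos rfl, one_pow]
    convert hasSum_single 0 fun j hj => ?_
    · simp [centralT_self]
    · simp [hj]
  have hsinhc := (hasSum_sinh_pow ℓ z).div_const (z ^ ℓ)
  rw [← div_pow, show Complex.sinh z / z = sinhc z from (if_neg hz).symm] at hsinhc
  have hinj : Function.Injective fun j : ℕ => 2 * j + ℓ := fun a b hab => by
    dsimp only at hab; omega
  have hsupp : ∀ n ∉ Set.range fun j : ℕ => 2 * j + ℓ,
      (2 : ℂ) ^ n * ℓ ! * centralT n ℓ * z ^ n / n ! / 2 ^ ℓ / z ^ ℓ = 0 := fun n hn => by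
    simp [centralT_eq_zero_of_notMem_range hn]
  exact ((hinj.hasSum_iff hsupp).mpr hsinhc).congr_fun fun j =>
    (two_pow_mul_factorial_mul_div_pow ℓ j _ hz).symm
end
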